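/- The inverse monoid AO_n is generated by the n specified rank-(n-1) order-preserving partial injections x_1, ..., x_n, and has rank exactly n (no generating set of size < n exists). -/

import Mathlib

/-- Partial transformations on `Fin n`, represented as `Option`-valued maps. -/
abbrev PT (n : ℕ) := Fin n → Option (Fin n)

/-- Left-to-right composition of partial maps: `x (pcomp f g) = (x f) g`. -/
def pcomp {n : ℕ} (f g : PT n) : PT n := fun x => (f x).bind g

/-- The identity partial map. -/
def pid (n : ℕ) : PT n := fun x => some x

instance PTMonoid (n : ℕ) : Monoid (PT n) where
  mul := pcomp
  one := pid n
  mul_assoc f g h := funext fun x => by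
    show ((f x).bind g).bind h = (f x).bind fun y => (g y).bind h
    cases f x <;> rfl
  one_mul f := rfl
  mul_one f := funext fun x => by
    show (f x).bind (fun y => some y) = f x
    cases f x <;> rfl

/-- `f` is injective on its domain. -/
def pInj {n : ℕ} (f : PT n) : Prop := ∀ x y a, f x = some a → f y = some a → x = y

/-- The domain of a partial map. -/
def pDom {n : ℕ} (f : PT n) : Finset (Fin n) := Finset.univ.filter fun x => (f x).isSome

/-- The image of a partial map. -/
def pIm {n : ℕ} (f : PT n) : Finset (Fin n) := Finset.univ.filter fun b => ∃ x, f x = some b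

/-- The rank of a partial map is the size of its domain. -/
def prank {n : ℕ} (f : PT n) : ℕ := (pDom f).card

/-- Order-preserving partial maps. -/
def orderPres {n : ℕ} (f : PT n) : Prop :=
  ∀ x y a b, f x = some a → f y = some b → x ≤ y → a ≤ b

/-- Order-reversing partial maps. -/
def orderRev {n : ℕ} (f : PT n) : Prop :=
  ∀ x y a b, f x = some a → f y = some b → x ≤ y → b ≤ a

/-- Monotone partial maps. -/
def isMonotonePT {n : ℕ} (f : PT n) : Prop := orderPres f ∨ orderRev f

/-- The permutation `σ` extends the partial map `f`. -/
def extendsTo {n : ℕ} (σ : Equiv.Perm (Fin n)) (f : PT n) : Prop :=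
  ∀ x a, f x = some a → σ x = a

/-- Membership in the alternating inverse monoid `AI_n`: an injective partial map of
rank `≤ n - 2`, or one that extends to an even permutation. -/
def inAI {n : ℕ} (f : PT n) : Prop :=
  pInj f ∧ (prank f + 2 ≤ n ∨
    ∃ σ : Equiv.Perm (Fin n), σ ∈ alternatingGroup (Fin n) ∧ extendsTo σ f)

/-- `AO_n = AI_n ∩ POI_n`. -/
def AO (n : ℕ) : Set (PT n) := {f | orderPres f ∧ inAI f}

/-- `AM_n = AI_n ∩ PMI_n`. -/
def AM (n : ℕ) : Set (PT n) := {f | isMonotonePT f ∧ inAI f}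

/-- Green's `J`-relation relative to a submonoid-like subset `S` (containing the identity):
`a J b` iff each lies in the two-sided principal ideal of the other. -/
def JRelIn {n : ℕ} (S : Set (PT n)) (a b : PT n) : Prop :=
  (∃ u v, u ∈ S ∧ v ∈ S ∧ a = u * b * v) ∧ (∃ u v, u ∈ S ∧ v ∈ S ∧ b = u * a * v)

/-- The (unique) order-preserving bijection from `Fin n \ {i}` onto `Fin n \ {j}`. -/
def opBij {n : ℕ} (i j : Fin n) : PT n := fun x =>
  if hx : x = i then none
  else if hlt : x.val < i.val then
    (if hp : x.val < j.val then some ⟨x.val, lt_trans hp j.isLt⟩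
     else some ⟨x.val + 1, by have := i.isLt; omega⟩)
  else
    (if hp : x.val - 1 < j.val then some ⟨x.val - 1, lt_trans hp j.isLt⟩
     else some ⟨x.val, x.isLt⟩)

/-- The generators `x_1, …, x_n` of `AO_n` (indexed 1-based by `i`):
`x_1 : X_1 → X_n` (`n` odd) or `X_1 → X_{n-1}` (`n` even); `x_2 : X_2 → X_{n-1}` (`n` odd)
or `X_2 → X_n` (`n` even); `x_i : X_i → X_{i-2}` for `3 ≤ i ≤ n`. -/
def xg (n : ℕ) (hn : 2 ≤ n) (i : ℕ) : PT n :=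
  if h3 : 3 ≤ i ∧ i ≤ n then opBij ⟨i - 1, by omega⟩ ⟨i - 3, by omega⟩
  else if i = 1 then
    opBij ⟨0, by omega⟩ (if n % 2 = 1 then ⟨n - 1, by omega⟩ else ⟨n - 2, by omega⟩)
  else
    opBij ⟨1, by omega⟩ (if n % 2 = 1 then ⟨n - 2, by omega⟩ else ⟨n - 1, by omega⟩)

/-- The generating set `{x_1, …, x_n}` of `AO_n`. -/
def AOgens (n : ℕ) (hn : 2 ≤ n) : Set (PT n) :=
  {f | ∃ i : ℕ, 1 ≤ i ∧ i ≤ n ∧ f = xg n hn i}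

/-!
An element of `AO n` of rank `n` is the identity, and one of rank `n - 1` is the order-preserving
bijection `X_i → X_j` determined by its domain and image; it extends to an even permutation,
the cycle through `i, …, j`, exactly when `i ≡ j (mod 2)`. In each parity class the generators
form a cycle of such maps (`x_k : X_k → X_{k-2}`, closed up by `x_1` or `x_2`), and composing
along it gives every `X_i → X_j` with `i ≡ j`.

An order-preserving partial injection is determined by its domain and image. In rank `≤ n - 2`,
precomposing or postcomposing with an `X_k → X_j` (`k < j`, `k ≡ j`) with `k` missing from the
domain or image pushes that set down and lowers its sum; this terminates when domain and image are
the same initial segment, where the partial identity is a product of the partial identities on the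
`X_i`.

For the rank bound, a generating set contains, for each `i`, a factor of the partial identity on
`X_i` with domain exactly `X_i`, and these factors are distinct.
-/

open Finset

section PartialMaps

variable {n : ℕ} {f g : PT n} {x a : Fin n}

theorem PT.mul_apply (f g : PT n) (x : Fin n) : (f * g) x = (f x).bind g := rfl

theorem PT.one_apply (x : Fin n) : (1 : PT n) x = some x := rfl

theorem PT.mul_eq_some : (f * g) x = some a ↔ ∃ b, f x = some b ∧ g b = some a :=
  Option.bind_eq_some_iff

theorem mem_pDom : x ∈ pDom f ↔ ∃ a, f x = some a := by
  simp [pDom, Option.isSome_iff_exists]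

theorem mem_pIm : a ∈ pIm f ↔ ∃ x, f x = some a := by
  simp [pIm]

theorem pDom_one : pDom (1 : PT n) = univ := by
  ext x; simp [mem_pDom, PT.one_apply]

theorem pIm_one : pIm (1 : PT n) = univ := by
  ext x; simp [mem_pIm, PT.one_apply]

theorem pDom_mul_subset (f g : PT n) : pDom (f * g) ⊆ pDom f := by
  intro x hx
  obtain ⟨a, ha⟩ := mem_pDom.mp hx
  obtain ⟨b, hb, -⟩ := PT.mul_eq_some.mp ha
  exact mem_pDom.mpr ⟨b, hb⟩

theorem pIm_mul_subset (f g : PT n) : pIm (f * g) ⊆ pIm g := by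
  intro a ha
  obtain ⟨x, hx⟩ := mem_pIm.mp ha
  obtain ⟨b, -, hb⟩ := PT.mul_eq_some.mp hx
  exact mem_pIm.mpr ⟨b, hb⟩

theorem pDom_mul_of_subset (h : pIm f ⊆ pDom g) : pDom (f * g) = pDom f := by
  refine (pDom_mul_subset f g).antisymm fun x hx => ?_
  obtain ⟨b, hb⟩ := mem_pDom.mp hx
  obtain ⟨a, ha⟩ := mem_pDom.mp (h (mem_pIm.mpr ⟨x, hb⟩))
  exact mem_pDom.mpr ⟨a, PT.mul_eq_some.mpr ⟨b, hb, ha⟩⟩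

theorem pIm_mul_of_subset (h : pDom g ⊆ pIm f) : pIm (f * g) = pIm g := by
  refine (pIm_mul_subset f g).antisymm fun a ha => ?_
  obtain ⟨b, hb⟩ := mem_pIm.mp ha
  obtain ⟨x, hx⟩ := mem_pIm.mp (h (mem_pDom.mpr ⟨a, hb⟩))
  exact mem_pIm.mpr ⟨x, PT.mul_eq_some.mpr ⟨b, hx, hb⟩⟩

theorem pInj_one : pInj (1 : PT n) := by
  intro x y a hx hy
  simp only [PT.one_apply, Option.some.injEq] at hx hy
  rw [hx, hy]

theorem orderPres_one : orderPres (1 : PT n) := by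
  intro x y a b hx hy hxy
  simp only [PT.one_apply, Option.some.injEq] at hx hy
  rwa [← hx, ← hy]

theorem pInj.mul (hf : pInj f) (hg : pInj g) : pInj (f * g) := by
  intro x y a hx hy
  obtain ⟨b, hxb, hba⟩ := PT.mul_eq_some.mp hx
  obtain ⟨c, hyc, hca⟩ := PT.mul_eq_some.mp hy
  obtain rfl := hg b c a hba hca
  exact hf x y b hxb hyc

theorem orderPres.mul (hf : orderPres f) (hg : orderPres g) : orderPres (f * g) := by
  intro x y a b hx hy hxy
  obtain ⟨c, hxc, hca⟩ := PT.mul_eq_some.mp hx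
  obtain ⟨d, hyd, hdb⟩ := PT.mul_eq_some.mp hy
  exact hg c d a b hca hdb (hf x y c d hxc hyd hxy)

def pRestrict (f : PT n) (S : Finset (Fin n)) (hS : S ⊆ pDom f) (x : S) : Fin n :=
  (f x).get (by simpa [pDom] using hS x.2)

theorem apply_eq_pRestrict {S : Finset (Fin n)} (hS : S ⊆ pDom f) (x : S) :
    f x = some (pRestrict f S hS x) := by
  simp [pRestrict]

theorem pRestrict_injective (hf : pInj f) {S : Finset (Fin n)} (hS : S ⊆ pDom f) :
    Function.Injective (pRestrict f S hS) := fun x y h =>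
  Subtype.ext (hf x y _ (apply_eq_pRestrict hS x) (h ▸ apply_eq_pRestrict hS y))

theorem pRestrict_strictMono (hf : pInj f) (ho : orderPres f) {S : Finset (Fin n)}
    (hS : S ⊆ pDom f) : StrictMono (pRestrict f S hS) := fun x y hxy =>
  (ho x y _ _ (apply_eq_pRestrict hS x) (apply_eq_pRestrict hS y) hxy.le).lt_of_ne
    fun h => hxy.ne (pRestrict_injective hf hS h)

theorem range_pRestrict {S : Finset (Fin n)} (hS : S = pDom f) :
    Set.range (pRestrict f S hS.subset) = pIm f := by
  ext a
  simp only [Set.mem_range, mem_coe, mem_pIm]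
  constructor
  · rintro ⟨x, rfl⟩
    exact ⟨x, apply_eq_pRestrict _ x⟩
  · rintro ⟨x, hx⟩
    have hxS : x ∈ S := hS ▸ mem_pDom.mpr ⟨a, hx⟩
    exact ⟨⟨x, hxS⟩, Option.some_injective _ ((apply_eq_pRestrict _ _).symm.trans hx)⟩

theorem card_pIm (hf : pInj f) : (pIm f).card = prank f := by
  have himage : (univ : Finset (pDom f)).image (pRestrict f _ subset_rfl) = pIm f := by
    apply coe_injective
    rw [coe_image, coe_univ, Set.image_univ, range_pRestrict rfl]
  rw [← himage, card_image_of_injective _ (pRestrict_injective hf _), card_univ,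
    Fintype.card_coe, prank]

theorem eq_of_pDom_eq_of_pIm_eq (hf : pInj f) (hfo : orderPres f) (hg : pInj g)
    (hgo : orderPres g) (hD : pDom f = pDom g) (hI : pIm f = pIm g) : f = g := by
  have hfg : pRestrict f (pDom f) subset_rfl = pRestrict g (pDom f) hD.subset := by
    rw [← StrictMono.range_inj (pRestrict_strictMono hf hfo _) (pRestrict_strictMono hg hgo _),
      range_pRestrict rfl, range_pRestrict hD, hI]
  funext x
  by_cases hx : x ∈ pDom f
  · rw [apply_eq_pRestrict subset_rfl ⟨x, hx⟩, apply_eq_pRestrict hD.subset ⟨x, hx⟩, hfg]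
  · have hx' : x ∉ pDom g := hD ▸ hx
    simp only [pDom, mem_filter, mem_univ, true_and, Option.not_isSome_iff_eq_none] at hx hx'
    rw [hx, hx']

theorem eq_one_of_pDom_eq_univ (hf : pInj f) (ho : orderPres f) (h : pDom f = univ) : f = 1 := by
  refine eq_of_pDom_eq_of_pIm_eq hf ho pInj_one orderPres_one (h.trans pDom_one.symm) ?_
  rw [pIm_one]
  exact eq_univ_of_card _ (by rw [card_pIm hf, prank, h, card_univ])

end PartialMaps

section OpBij

variable {n : ℕ} {i j k x y a : Fin n}

/-- `opBij i j` moves the points between `i` (excluded) and `j` (included) one step towards `i`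
and fixes the others. -/
def opBijVal (i j x : ℕ) : ℕ :=
  if x < i then (if x < j then x else x + 1) else (if x - 1 < j then x - 1 else x)

def opBijFun (i j x : Fin n) : Fin n :=
  ⟨opBijVal i j x, by have := i.isLt; have := x.isLt; unfold opBijVal; split_ifs <;> omega⟩

theorem val_opBijFun (i j x : Fin n) : (opBijFun i j x).val = opBijVal i j x := rfl

theorem opBij_apply (i j x : Fin n) :
    opBij i j x = if x = i then none else some (opBijFun i j x) := by
  unfold opBij
  split_ifs <;> simp only [Option.some.injEq, Fin.ext_iff, val_opBijFun, opBijVal] <;>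
    split_ifs <;> omega

theorem opBij_of_ne (h : x ≠ i) : opBij i j x = some (opBijFun i j x) := by
  rw [opBij_apply, if_neg h]

theorem opBij_eq_some : opBij i j x = some a ↔ x ≠ i ∧ opBijFun i j x = a := by
  rw [opBij_apply]
  split_ifs with h <;> simp [h]

theorem opBijFun_ne (h : x ≠ i) : opBijFun i j x ≠ j := by
  rw [Ne, Fin.ext_iff] at *
  rw [val_opBijFun]; unfold opBijVal; split_ifs <;> omega

theorem opBijFun_opBijFun (h : x ≠ i) : opBijFun j k (opBijFun i j x) = opBijFun i k x := by
  rw [Ne, Fin.ext_iff] at h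
  rw [Fin.ext_iff, val_opBijFun, val_opBijFun, val_opBijFun]
  unfold opBijVal; split_ifs <;> omega

theorem opBijFun_self (h : x ≠ i) : opBijFun i i x = x := by
  rw [Ne, Fin.ext_iff] at h
  rw [Fin.ext_iff, val_opBijFun]; unfold opBijVal; split_ifs <;> omega

theorem opBijFun_lt_opBijFun (hx : x ≠ i) (hy : y ≠ i) (hxy : x < y) :
    opBijFun i j x < opBijFun i j y := by
  rw [Ne, Fin.ext_iff] at hx hy
  rw [Fin.lt_def] at hxy ⊢
  rw [val_opBijFun, val_opBijFun]; unfold opBijVal; split_ifs <;> omega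

theorem opBij_mul (i j k : Fin n) : opBij i j * opBij j k = opBij i k := by
  funext x
  rw [PT.mul_apply, opBij_apply, opBij_apply i k]
  split_ifs with h
  · rfl
  · rw [Option.bind_some, opBij_of_ne (opBijFun_ne h), opBijFun_opBijFun h]

theorem opBij_self_apply (i x : Fin n) : opBij i i x = if x = i then none else some x := by
  rw [opBij_apply]
  split_ifs with h
  · rfl
  · rw [opBijFun_self h]

theorem pInj_opBij (i j : Fin n) : pInj (opBij i j) := by
  intro x y a hx hy
  rw [opBij_eq_some] at hx hy
  by_contra hxy
  rcases lt_or_gt_of_ne hxy with h | h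
  · exact (opBijFun_lt_opBijFun hx.1 hy.1 h).ne (hx.2.trans hy.2.symm)
  · exact (opBijFun_lt_opBijFun hy.1 hx.1 h).ne (hy.2.trans hx.2.symm)

theorem orderPres_opBij (i j : Fin n) : orderPres (opBij i j) := by
  intro x y a b hx hy hxy
  rw [opBij_eq_some] at hx hy
  rw [← hx.2, ← hy.2]
  rcases hxy.lt_or_eq with h | rfl
  · exact (opBijFun_lt_opBijFun hx.1 hy.1 h).le
  · exact le_rfl

theorem pDom_opBij (i j : Fin n) : pDom (opBij i j) = univ.erase i := by
  ext x
  simp [pDom, opBij_apply]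

theorem pIm_opBij (i j : Fin n) : pIm (opBij i j) = univ.erase j := by
  ext a
  simp only [mem_pIm, opBij_eq_some, mem_erase, mem_univ, and_true]
  constructor
  · rintro ⟨x, hx, rfl⟩
    exact opBijFun_ne hx
  · intro ha
    refine ⟨opBijFun j i a, opBijFun_ne ha, ?_⟩
    rw [opBijFun_opBijFun ha, opBijFun_self ha]

end OpBij

section Parity

variable {n : ℕ} {i j : Fin n} {σ τ : Equiv.Perm (Fin n)}

theorem Equiv.Perm.eq_of_apply_eq_of_ne (h : ∀ x, x ≠ i → σ x = τ x) : σ = τ := by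
  have hsupp : (τ⁻¹ * σ).support ⊆ {i} := fun x hx => by
    by_contra hxi
    rw [Equiv.Perm.mem_support, Equiv.Perm.mul_apply, h x (by simpa using hxi)] at hx
    exact hx (Equiv.Perm.inv_eq_iff_eq.mpr rfl)
  have h1 : τ⁻¹ * σ = 1 :=
    Equiv.Perm.card_support_le_one.mp ((card_le_card hsupp).trans (card_singleton i).le)
  exact (inv_mul_eq_one.mp h1).symm

theorem Fin.val_cycleRange (i x : Fin n) :
    (Fin.cycleRange i x).val = if x < i then x.val + 1 else if x = i then 0 else x.val := by
  rcases lt_trichotomy x i with h | rfl | h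
  · rw [Fin.coe_cycleRange_of_lt h, if_pos h]
  · rw [Fin.coe_cycleRange_of_le le_rfl, if_pos rfl, if_neg (lt_irrefl x), if_pos rfl]
  · rw [Fin.cycleRange_of_gt h, if_neg (not_lt.mpr h.le), if_neg h.ne']

/-- `cycleRange i` rotates `0, …, i` forwards and `(cycleRange j)⁻¹` rotates `0, …, j` back, so
the product is the cycle through `i, …, j`. -/
theorem extendsTo_opBij (i j : Fin n) :
    extendsTo ((Fin.cycleRange j)⁻¹ * Fin.cycleRange i) (opBij i j) := by
  intro x a hx
  obtain ⟨hxi, rfl⟩ := opBij_eq_some.mp hx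
  rw [Equiv.Perm.mul_apply, Equiv.Perm.inv_eq_iff_eq, Fin.ext_iff, Fin.val_cycleRange,
    Fin.val_cycleRange]
  rw [Ne, Fin.ext_iff] at hxi
  simp only [Fin.lt_def, Fin.ext_iff, val_opBijFun, opBijVal]
  split_ifs <;> omega

theorem sign_cycleRange_inv_mul (i j : Fin n) :
    Equiv.Perm.sign ((Fin.cycleRange j)⁻¹ * Fin.cycleRange i) = (-1) ^ (i.val + j.val) := by
  rw [map_mul, Equiv.Perm.sign_inv, Fin.sign_cycleRange, Fin.sign_cycleRange, ← pow_add,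
    add_comm]

theorem opBij_mem_AO_iff : opBij i j ∈ AO n ↔ i.val % 2 = j.val % 2 := by
  have hrank : prank (opBij i j) + 1 = n := by
    rw [prank, pDom_opBij, card_erase_of_mem (mem_univ i), card_univ, Fintype.card_fin]
    have := i.pos
    omega
  have hsign : Equiv.Perm.sign ((Fin.cycleRange j)⁻¹ * Fin.cycleRange i) = 1 ↔
      i.val % 2 = j.val % 2 := by
    rw [sign_cycleRange_inv_mul, neg_one_pow_eq_one_iff_even (by decide), Nat.even_add,
      Nat.even_iff, Nat.even_iff]
    omega
  refine ⟨fun h => ?_, fun h => ⟨orderPres_opBij i j, pInj_opBij i j,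
    Or.inr ⟨_, hsign.mpr h, extendsTo_opBij i j⟩⟩⟩
  obtain ⟨τ, hτ, hτext⟩ := h.2.2.resolve_left (by omega)
  have hτeq : τ = (Fin.cycleRange j)⁻¹ * Fin.cycleRange i :=
    Equiv.Perm.eq_of_apply_eq_of_ne fun x hx =>
      (hτext x _ (opBij_of_ne hx)).trans (extendsTo_opBij i j x _ (opBij_of_ne hx)).symm
  exact hsign.mp (hτeq ▸ hτ)

end Parity

section Submonoid

variable {n : ℕ} {f g : PT n}

theorem extendsTo.mul {σ τ : Equiv.Perm (Fin n)} (hσ : extendsTo σ f) (hτ : extendsTo τ g) :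
    extendsTo (τ * σ) (f * g) := by
  intro x a hx
  obtain ⟨b, hxb, hba⟩ := PT.mul_eq_some.mp hx
  rw [Equiv.Perm.mul_apply, hσ x b hxb, hτ b a hba]

theorem one_mem_AO : (1 : PT n) ∈ AO n :=
  ⟨orderPres_one, pInj_one, Or.inr ⟨1, one_mem _, fun _ _ h => Option.some_injective _ h⟩⟩

theorem mul_mem_AO (hf : f ∈ AO n) (hg : g ∈ AO n) : f * g ∈ AO n := by
  obtain ⟨hfo, hfi, hfA⟩ := hf
  obtain ⟨hgo, hgi, hgA⟩ := hg
  refine ⟨hfo.mul hgo, hfi.mul hgi, or_iff_not_imp_left.mpr fun hr => ?_⟩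
  have hrf : prank (f * g) ≤ prank f := card_le_card (pDom_mul_subset f g)
  have hrg : prank (f * g) ≤ prank g := by
    rw [← card_pIm (hfi.mul hgi), ← card_pIm hgi]
    exact card_le_card (pIm_mul_subset f g)
  obtain ⟨σ, hσ, hσf⟩ := hfA.resolve_left (by omega)
  obtain ⟨τ, hτ, hτg⟩ := hgA.resolve_left (by omega)
  exact ⟨τ * σ, mul_mem hτ hσ, hσf.mul hτg⟩

def AOSubmonoid (n : ℕ) : Submonoid (PT n) where
  carrier := AO n
  mul_mem' := mul_mem_AO
  one_mem' := one_mem_AO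

theorem prank_le (f : PT n) : prank f ≤ n :=
  (card_le_univ _).trans_eq (Fintype.card_fin n)

theorem exists_eq_erase_of_card_add_one {S : Finset (Fin n)} (h : S.card + 1 = n) :
    ∃ i, S = univ.erase i := by
  obtain ⟨i, hi⟩ := card_eq_one.mp (by rw [card_compl, Fintype.card_fin]; omega : Sᶜ.card = 1)
  exact ⟨i, by rw [← compl_singleton, ← hi, compl_compl]⟩

theorem eq_opBij_of_prank_add_one (hf : pInj f) (ho : orderPres f) (hr : prank f + 1 = n) :
    ∃ i j, f = opBij i j := by
  obtain ⟨i, hi⟩ := exists_eq_erase_of_card_add_one hr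
  obtain ⟨j, hj⟩ := exists_eq_erase_of_card_add_one (S := pIm f) (by rwa [card_pIm hf])
  exact ⟨i, j, eq_of_pDom_eq_of_pIm_eq hf ho (pInj_opBij i j) (orderPres_opBij i j)
    (hi.trans (pDom_opBij i j).symm) (hj.trans (pIm_opBij i j).symm)⟩

end Submonoid

section Generators

variable {n : ℕ} (hn : 2 ≤ n)

theorem exists_xg_eq_opBij (i : ℕ) :
    ∃ a b : Fin n, a.val % 2 = b.val % 2 ∧ xg n hn i = opBij a b := by
  unfold xg
  split_ifs <;> exact ⟨_, _, by simp only; omega, rfl⟩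

theorem closure_AOgens_subset_AO : (Submonoid.closure (AOgens n hn) : Set (PT n)) ⊆ AO n := by
  refine Submonoid.closure_le (S := AOSubmonoid n) |>.mpr ?_
  rintro _ ⟨i, -, -, rfl⟩
  obtain ⟨a, b, hab, he⟩ := exists_xg_eq_opBij hn i
  exact he ▸ opBij_mem_AO_iff.mpr hab

theorem opBij_mem_closure_of_val_eq_add_two {a b : Fin n} (h : a.val = b.val + 2) :
    opBij a b ∈ Submonoid.closure (AOgens n hn) := by
  have hmem : xg n hn (a.val + 1) ∈ Submonoid.closure (AOgens n hn) :=
    Submonoid.subset_closure ⟨_, by omega, a.isLt, rfl⟩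
  rw [xg, dif_pos ⟨by omega, a.isLt⟩] at hmem
  convert hmem using 2 <;> ext <;> simp only <;> omega

/-- The generators `x_1` and `x_2` send the least point of a parity class to its largest one. -/
theorem opBij_mem_closure_of_top {p t : Fin n} (hp : p.val < 2) (ht : t.val % 2 = p.val)
    (htn : n ≤ t.val + 2) : opBij p t ∈ Submonoid.closure (AOgens n hn) := by
  have hmem : xg n hn (p.val + 1) ∈ Submonoid.closure (AOgens n hn) :=
    Submonoid.subset_closure ⟨_, by omega, by omega, rfl⟩
  rw [xg, dif_neg (by omega)] at hmem
  convert hmem using 1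
  split_ifs <;> congr 1 <;> ext <;> simp only <;> omega

theorem opBij_mem_closure_of_lt {a b : Fin n} (hab : b < a) (h : a.val % 2 = b.val % 2) :
    opBij a b ∈ Submonoid.closure (AOgens n hn) := by
  obtain ⟨d, hd⟩ : ∃ d, a.val = b.val + 2 * d + 2 := ⟨(a.val - b.val - 2) / 2, by omega⟩
  induction d generalizing a with
  | zero => exact opBij_mem_closure_of_val_eq_add_two hn hd
  | succ d ih =>
    let c : Fin n := ⟨b.val + 2 * d + 2, by omega⟩
    rw [← opBij_mul a c b]
    exact mul_mem (opBij_mem_closure_of_val_eq_add_two hn (by simp only [c]; omega))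
      (ih (by rw [Fin.lt_def]; simp only [c]; omega) (by simp only [c]; omega) rfl)

theorem opBij_mem_closure {i j : Fin n} (h : i.val % 2 = j.val % 2) :
    opBij i j ∈ Submonoid.closure (AOgens n hn) := by
  let p : Fin n := ⟨j.val % 2, by omega⟩
  let t : Fin n := ⟨if (n - 1) % 2 = j.val % 2 then n - 1 else n - 2, by split_ifs <;> omega⟩
  have hjt : j ≤ t := by rw [Fin.le_def]; simp only [t]; split_ifs <;> omega
  have hpj : opBij p j ∈ Submonoid.closure (AOgens n hn) := by
    have hpt := opBij_mem_closure_of_top hn (p := p) (t := t) (Nat.mod_lt _ two_pos)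
      (by simp only [t, p]; split_ifs <;> omega) (by simp only [t]; split_ifs <;> omega)
    by_cases hjt' : j = t
    · rwa [hjt']
    · rw [← opBij_mul p t j]
      exact mul_mem hpt (opBij_mem_closure_of_lt hn (lt_of_le_of_ne hjt hjt')
        (by simp only [t]; split_ifs <;> omega))
  have hpi : p ≤ i := by rw [Fin.le_def]; simp only [p]; omega
  by_cases hpi' : p = i
  · rwa [← hpi']
  · rw [← opBij_mul i p j]
    exact mul_mem (opBij_mem_closure_of_lt hn (lt_of_le_of_ne hpi hpi') (by simp only [p]; omega))
      hpj

end Generators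

section Shifts

variable {n : ℕ} {i j k x : Fin n} {g : PT n} {S : Finset (Fin n)}

theorem opBijFun_opBijFun_cancel (h : x ≠ i) : opBijFun j i (opBijFun i j x) = x := by
  rw [opBijFun_opBijFun h, opBijFun_self h]

theorem opBijFun_le (hij : i ≤ j) (x : Fin n) : opBijFun i j x ≤ x := by
  rw [Fin.le_def] at hij ⊢
  rw [val_opBijFun]; unfold opBijVal; split_ifs <;> omega

theorem opBijFun_lt (hix : i < x) (hxj : x ≤ j) : opBijFun i j x < x := by
  rw [Fin.lt_def] at hix ⊢
  rw [Fin.le_def] at hxj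
  rw [val_opBijFun]; unfold opBijVal; split_ifs <;> omega

theorem injOn_opBijFun (h : i ∉ S) : Set.InjOn (opBijFun i j) S := fun x hx y hy hxy => by
  rw [← opBijFun_opBijFun_cancel (j := j) (ne_of_mem_of_not_mem hx h),
    ← opBijFun_opBijFun_cancel (j := j) (ne_of_mem_of_not_mem hy h), hxy]

theorem image_opBijFun_image (h : i ∉ S) : (S.image (opBijFun i j)).image (opBijFun j i) = S := by
  rw [image_image]
  conv_rhs => rw [← image_id (s := S)]
  exact image_congr fun x hx => opBijFun_opBijFun_cancel (ne_of_mem_of_not_mem hx h)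

theorem notMem_image_opBijFun (h : i ∉ S) : j ∉ S.image (opBijFun i j) := by
  simp only [mem_image, not_exists, not_and]
  exact fun x hx => opBijFun_ne (ne_of_mem_of_not_mem hx h)

theorem pDom_opBij_mul (h : j ∉ pDom g) :
    pDom (opBij i j * g) = (pDom g).image (opBijFun j i) := by
  ext x
  simp only [mem_pDom, PT.mul_eq_some, opBij_eq_some, mem_image]
  constructor
  · rintro ⟨a, _, ⟨hxi, rfl⟩, hb⟩
    exact ⟨_, ⟨a, hb⟩, opBijFun_opBijFun_cancel hxi⟩
  · rintro ⟨y, ⟨a, hya⟩, rfl⟩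
    have hyj : y ≠ j := fun hyj => h (mem_pDom.mpr ⟨a, hyj ▸ hya⟩)
    exact ⟨a, y, ⟨opBijFun_ne hyj, opBijFun_opBijFun_cancel hyj⟩, hya⟩

theorem pIm_mul_opBij (h : i ∉ pIm g) :
    pIm (g * opBij i j) = (pIm g).image (opBijFun i j) := by
  ext a
  simp only [mem_pIm, PT.mul_eq_some, opBij_eq_some, mem_image]
  constructor
  · rintro ⟨x, b, hxb, hbi, rfl⟩
    exact ⟨b, ⟨x, hxb⟩, rfl⟩
  · rintro ⟨b, ⟨x, hxb⟩, rfl⟩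
    exact ⟨x, b, hxb, fun hbi => h (mem_pIm.mpr ⟨x, hbi ▸ hxb⟩), rfl⟩

theorem pDom_pIm_opBij_mul (hk : k ∉ S) (hg : pDom g = S.image (opBijFun k j)) :
    pDom (opBij k j * g) = S ∧ pIm (opBij k j * g) = pIm g := by
  have hj : j ∉ pDom g := hg ▸ notMem_image_opBijFun hk
  refine ⟨?_, pIm_mul_of_subset ?_⟩
  · rw [pDom_opBij_mul hj, hg, image_opBijFun_image hk]
  · rw [pIm_opBij]
    exact subset_erase.mpr ⟨subset_univ _, hj⟩

theorem pDom_pIm_mul_opBij (hk : k ∉ S) (hg : pIm g = S.image (opBijFun k j)) :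
    pDom (g * opBij j k) = pDom g ∧ pIm (g * opBij j k) = S := by
  have hj : j ∉ pIm g := hg ▸ notMem_image_opBijFun hk
  refine ⟨pDom_mul_of_subset ?_, ?_⟩
  · rw [pDom_opBij]
    exact subset_erase.mpr ⟨subset_univ _, hj⟩
  · rw [pIm_mul_opBij hj, hg, image_opBijFun_image hk]

theorem sum_image_opBijFun_lt (hk : k ∉ S) (hx : x ∈ S) (hkx : k < x) (hxj : x ≤ j) :
    ∑ y ∈ S.image (opBijFun k j), y.val < ∑ y ∈ S, y.val := by
  rw [sum_image (injOn_opBijFun hk)]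
  exact sum_lt_sum (fun y _ => opBijFun_le (hkx.le.trans hxj) y) ⟨x, hx, opBijFun_lt hkx hxj⟩

theorem exists_shift_of_not_isLowerSet (hS : ¬IsLowerSet (S : Set (Fin n)))
    (hcard : S.card + 2 ≤ n) :
    ∃ k j x : Fin n, k ∉ S ∧ x ∈ S ∧ k < x ∧ x ≤ j ∧ k.val % 2 = j.val % 2 := by
  obtain ⟨a, b, hba, haS, hbS⟩ : ∃ a b, b ≤ a ∧ a ∈ S ∧ b ∉ S := by
    simpa [IsLowerSet] using hS
  obtain ⟨k, hkS, hkmin⟩ := Sᶜ.exists_min_image Fin.val ⟨b, mem_compl.mpr hbS⟩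
  rw [mem_compl] at hkS
  have hka : k < a := lt_of_le_of_ne ((Fin.le_def.mpr (hkmin b (mem_compl.mpr hbS))).trans hba)
    fun h => hkS (h ▸ haS)
  obtain ⟨d, hd, hdmin⟩ :=
    (S.filter (k < ·)).exists_min_image Fin.val ⟨a, mem_filter.mpr ⟨haS, hka⟩⟩
  obtain ⟨hdS, hkd⟩ := mem_filter.mp hd
  rw [Fin.lt_def] at hkd
  by_cases hpar : k.val % 2 = d.val % 2
  · exact ⟨k, d, d, hkS, hdS, hkd, le_rfl, hpar⟩
  by_cases hdn : d.val + 1 < n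
  · exact ⟨k, ⟨d.val + 1, hdn⟩, d, hkS, hdS, hkd, by rw [Fin.le_def]; simp, by simp only; omega⟩
  -- Here `d = n - 1` is the only point of `S` above `k`; as `S` misses at least two points,
  -- `k + 1 < d` is missing too, and it has the parity of `d`.
  have hkd' : k.val + 1 < d.val := by
    by_contra hle
    have hsub : univ.erase k ⊆ S := fun y hy => by
      by_contra hyS
      have hky := hkmin y (mem_compl.mpr hyS)
      have hyk := (mem_erase.mp hy).1
      rw [Ne, Fin.ext_iff] at hyk
      exact hyS (Fin.ext (by omega : y.val = d.val) ▸ hdS)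
    have := card_le_card hsub
    rw [card_erase_of_mem (mem_univ k), card_univ, Fintype.card_fin] at this
    omega
  have hk1S : (⟨k.val + 1, by omega⟩ : Fin n) ∉ S := fun h =>
    absurd (hdmin _ (mem_filter.mpr ⟨h, by rw [Fin.lt_def]; simp⟩)) (by simp only; omega)
  exact ⟨⟨k.val + 1, by omega⟩, d, d, hk1S, hdS, by rw [Fin.lt_def]; simp only; omega, le_rfl,
    by simp only; omega⟩

end Shifts

section SmallRank

variable {n : ℕ} (hn : 2 ≤ n)

def pidOn (S : Finset (Fin n)) : PT n := fun x => if x ∈ S then some x else none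

theorem pDom_pidOn (S : Finset (Fin n)) : pDom (pidOn S) = S := by
  ext x; by_cases hx : x ∈ S <;> simp [mem_pDom, pidOn, hx]

theorem pIm_pidOn (S : Finset (Fin n)) : pIm (pidOn S) = S := by
  ext x; by_cases hx : x ∈ S <;> simp [mem_pIm, pidOn, hx]

theorem pidOn_compl_mem_closure {T : Finset (Fin n)} (hT : T.Nonempty) :
    pidOn Tᶜ ∈ Submonoid.closure (AOgens n hn) := by
  induction hT using Nonempty.cons_induction with
  | singleton a =>
    convert opBij_mem_closure hn (i := a) rfl using 1
    funext x
    simp [pidOn, opBij_self_apply]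
  | cons a T haT hT ih =>
    convert mul_mem ih (opBij_mem_closure hn (i := a) rfl) using 1
    funext x
    by_cases hxT : x ∈ T <;> by_cases hxa : x = a <;>
      simp [pidOn, PT.mul_apply, opBij_self_apply, hxT, hxa, haT]

theorem Finset.eq_of_isLowerSet_of_card_eq {α : Type*} [LinearOrder α] {D E : Finset α}
    (hD : IsLowerSet (D : Set α)) (hE : IsLowerSet (E : Set α)) (h : D.card = E.card) : D = E := by
  rcases hD.total hE with hDE | hED
  · exact eq_of_subset_of_card_le (coe_subset.mp hDE) h.ge
  · exact (eq_of_subset_of_card_le (coe_subset.mp hED) h.le).symm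

theorem exists_mem_closure_pDom_pIm (D E : Finset (Fin n)) (hDE : D.card = E.card)
    (hcard : D.card + 2 ≤ n) :
    ∃ g ∈ Submonoid.closure (AOgens n hn), pDom g = D ∧ pIm g = E := by
  induction hw : ∑ x ∈ D, x.val + ∑ x ∈ E, x.val using Nat.strong_induction_on
    generalizing D E with
  | _ w ih =>
    by_cases hD : IsLowerSet (D : Set (Fin n))
    · by_cases hE : IsLowerSet (E : Set (Fin n))
      · obtain rfl := eq_of_isLowerSet_of_card_eq hD hE hDE
        refine ⟨pidOn D, ?_, pDom_pidOn D, pIm_pidOn D⟩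
        rw [← compl_compl D]
        exact pidOn_compl_mem_closure hn (by rw [← card_pos, card_compl, Fintype.card_fin]; omega)
      · obtain ⟨k, j, x, hkE, hxE, hkx, hxj, hkj⟩ :=
          exists_shift_of_not_isLowerSet hE (hDE ▸ hcard)
        obtain ⟨g, hg, hgD, hgE⟩ := ih _ (hw ▸ add_lt_add_right
          (sum_image_opBijFun_lt hkE hxE hkx hxj) _) D (E.image (opBijFun k j))
          (hDE.trans (card_image_of_injOn (injOn_opBijFun hkE)).symm) hcard rfl
        obtain ⟨hD', hE'⟩ := pDom_pIm_mul_opBij hkE hgE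
        exact ⟨g * opBij j k, mul_mem hg (opBij_mem_closure hn hkj.symm), hD'.trans hgD, hE'⟩
    · obtain ⟨k, j, x, hkD, hxD, hkx, hxj, hkj⟩ := exists_shift_of_not_isLowerSet hD hcard
      have hcard' := card_image_of_injOn (injOn_opBijFun (j := j) hkD)
      obtain ⟨g, hg, hgD, hgE⟩ := ih _ (hw ▸ add_lt_add_left
        (sum_image_opBijFun_lt hkD hxD hkx hxj) _) (D.image (opBijFun k j)) E
        (hcard'.trans hDE) (hcard' ▸ hcard) rfl
      obtain ⟨hD', hE'⟩ := pDom_pIm_opBij_mul hkD hgD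
      exact ⟨opBij k j * g, mul_mem (opBij_mem_closure hn hkj) hg, hD', hE'.trans hgE⟩

end SmallRank

theorem AO_subset_closure_AOgens {n : ℕ} (hn : 2 ≤ n) :
    AO n ⊆ Submonoid.closure (AOgens n hn) := by
  intro f hf
  obtain ⟨ho, hinj, -⟩ := id hf
  obtain hr | hr | hr : prank f + 2 ≤ n ∨ prank f + 1 = n ∨ prank f = n := by
    have := prank_le f
    omega
  · obtain ⟨g, hg, hgD, hgI⟩ :=
      exists_mem_closure_pDom_pIm hn (pDom f) (pIm f) (card_pIm hinj).symm hr
    obtain ⟨hgo, hginj, -⟩ := closure_AOgens_subset_AO hn hg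
    rwa [eq_of_pDom_eq_of_pIm_eq hinj ho hginj hgo hgD.symm hgI.symm]
  · obtain ⟨i, j, rfl⟩ := eq_opBij_of_prank_add_one hinj ho hr
    exact opBij_mem_closure hn (opBij_mem_AO_iff.mp hf)
  · rw [eq_one_of_pDom_eq_univ hinj ho (eq_univ_of_card _ (by rwa [Fintype.card_fin]))]
    exact one_mem _

/-- The first factor of `f` other than the identity already has domain `X_i`. -/
theorem exists_mem_pDom_eq_erase {n : ℕ} {G : Set (PT n)} (hG : G ⊆ AO n) {f : PT n}
    (hf : f ∈ Submonoid.closure G) (i : Fin n) (hfi : pDom f = univ.erase i) :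
    ∃ g ∈ G, pDom g = univ.erase i := by
  induction hf using Submonoid.closure_induction_left with
  | one => simp [pDom_one, eq_comm (a := univ)] at hfi
  | mul_left g hg h _ ih =>
    have hsub : univ.erase i ⊆ pDom g := hfi ▸ pDom_mul_subset g h
    by_cases hig : i ∈ pDom g
    · obtain ⟨hgo, hginj, -⟩ := hG hg
      have hg1 : g = 1 := eq_one_of_pDom_eq_univ hginj hgo
        (eq_univ_of_forall fun x => if hx : x = i then hx ▸ hig else hsub (by simpa using hx))
      rw [hg1, one_mul] at hfi
      exact ih hfi
    · refine ⟨g, hg, subset_antisymm (fun x hx => ?_) hsub⟩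
      exact mem_erase.mpr ⟨ne_of_mem_of_not_mem hx hig, mem_univ x⟩

theorem le_ncard_of_closure_eq_AO {n : ℕ} {G : Set (PT n)}
    (hG : (Submonoid.closure G : Set (PT n)) = AO n) : n ≤ G.ncard := by
  have hGAO : G ⊆ AO n := hG ▸ Submonoid.subset_closure
  have hex (i : Fin n) : ∃ g ∈ G, pDom g = univ.erase i :=
    exists_mem_pDom_eq_erase hGAO (hG.symm ▸ opBij_mem_AO_iff.mpr rfl :
      opBij i i ∈ (Submonoid.closure G : Set (PT n))) i (pDom_opBij i i)
  choose F hFG hFdom using hex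
  have hFinj : Function.Injective F := fun i j h =>
    (erase_inj _ (mem_univ i)).mp ((hFdom i).symm.trans (h ▸ hFdom j))
  simpa using Set.ncard_le_ncard_of_injOn (s := Set.univ) F (fun i _ => hFG i) hFinj.injOn
    (Set.toFinite G)

/-- `AO_n` is generated by `x_1, …, x_n` and has rank exactly `n`. -/
theorem stmt16 {n : ℕ} (hn : 2 ≤ n) :
    (Submonoid.closure (AOgens n hn) : Set (PT n)) = AO n ∧
      ∀ G : Set (PT n), (Submonoid.closure G : Set (PT n)) = AO n → n ≤ G.ncard :=
  ⟨(closure_AOgens_subset_AO hn).antisymm (AO_subset_closure_AOgens hn),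
    fun _ => le_ncard_of_closure_eq_AO⟩
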